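/- arXiv:0907.4126 — 6 statements merged into one kernel-verified Lean document; each statement's English description precedes it below -/
import Mathlib

section
/- Every second countable T1 topological space has a countable open-finite basis, i.e., a countable basis B such that every element of B has only finitely many supersets in B. -/
/-! Fix an enumerated countable basis `u` and a dense sequence `c`. Keep the singletons of
isolated points, and for every `n` and every non-isolated `p ∈ u n` take the open set
`u n \ (c '' Iio n \ {p})`, i.e. `u n` with the first `n` points of `c` other than `p` removed.
For each `n` there are only finitely many such sets, and removing the first `n` points bounds
`n` among the supersets of a fixed nonempty open `V`: `V` contains an isolated point, which is
some `c k` and differs from every non-isolated `p`, or it contains two distinct points of `c`,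
one of which differs from `p`. -/

open TopologicalSpace Set

universe u

variable {X : Type*}

/-- `U ≤ V` for sequences of open sets: every `V j` contains some `U i`. -/
def SeqLE (U V : ℕ → Set X) : Prop := ∀ j, ∃ i, U i ⊆ V j

/-- Mutual cofinal refinement of sequences of open sets. -/
def SeqEquiv (U V : ℕ → Set X) : Prop := SeqLE U V ∧ SeqLE V U

/-- A property of (descending) sequences of open sets is invariant if closed under `SeqEquiv`. -/
def InvariantProp (P : Set (ℕ → Set X)) : Prop :=
  ∀ U V : ℕ → Set X, SeqEquiv U V → V ∈ P → U ∈ P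

/-- A property is monotone if downward closed under `SeqLE`. -/
def MonotoneProp (P : Set (ℕ → Set X)) : Prop :=
  ∀ U V : ℕ → Set X, SeqLE U V → V ∈ P → U ∈ P

/-- A strategy for Nonempty in the (generalized) Choquet game: to a list of previous
moves of Empty and the latest move `(x, U)` of Empty it assigns an open set. -/
def NStrategy (X : Type*) : Type _ := List (X × Set X) → X × Set X → Set X

/-- The responses of Nonempty's strategy `S` during the play where Empty plays
`(x n, U n)` at round `n`. -/
def playV (S : NStrategy X) (x : ℕ → X) (U : ℕ → Set X) (n : ℕ) : Set X :=
  S ((List.range n).map fun i => (x i, U i)) (x n, U n)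

/-- The sequence of moves of Empty is legal against `S`: each `U n` is an open
neighborhood of `x n` and is contained in Nonempty's previous response. -/
def LegalPlay [TopologicalSpace X] (S : NStrategy X) (x : ℕ → X) (U : ℕ → Set X) : Prop :=
  ∀ n, IsOpen (U n) ∧ x n ∈ U n ∧ U (n + 1) ⊆ playV S x U n

/-- `S` always answers a legal move `(x, U)` with an open `V` with `x ∈ V ⊆ U`. -/
def ValidStrategy [TopologicalSpace X] (S : NStrategy X) : Prop :=
  ∀ x U, LegalPlay S x U →
    ∀ n, IsOpen (playV S x U n) ∧ x n ∈ playV S x U n ∧ playV S x U n ⊆ U n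

/-- `S` is a winning strategy for Nonempty in the game `Ch_P(X)`. -/
def WinningStrategy [TopologicalSpace X] (S : NStrategy X) (P : Set (ℕ → Set X)) : Prop :=
  ValidStrategy S ∧ ∀ x U, LegalPlay S x U → (fun n => playV S x U n) ∈ P

/-- A stationary strategy only depends on Empty's last move. -/
def IsStationaryStrategy (S : NStrategy X) : Prop := ∀ h m, S h m = S [] m

/-- The payoff set of the original Choquet game: the intersection is nonempty. -/
def ChoquetWin (X : Type*) : Set (ℕ → Set X) := {V | (⋂ n, V n).Nonempty}

/-- `S` is convergent: in any play following `S`, Nonempty's open sets form a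
neighborhood basis at every point of their intersection. -/
def ConvergentStrategy [TopologicalSpace X] (S : NStrategy X) : Prop :=
  ∀ x U, LegalPlay S x U → ∀ y ∈ ⋂ n, playV S x U n,
    ∀ W : Set X, IsOpen W → y ∈ W → ∃ n, playV S x U n ⊆ W

/-- Legal play in the basis-restricted game `Ch_P(X, B)`. -/
def LegalPlayIn [TopologicalSpace X] (B : Set (Set X)) (S : NStrategy X)
    (x : ℕ → X) (U : ℕ → Set X) : Prop :=
  LegalPlay S x U ∧ ∀ n, U n ∈ B

/-- Winning strategy for Nonempty in the basis-restricted game `Ch_P(X, B)`. -/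
def WinningStrategyIn [TopologicalSpace X] (B : Set (Set X)) (S : NStrategy X)
    (P : Set (ℕ → Set X)) : Prop :=
  (∀ x U, LegalPlayIn B S x U → ∀ n,
    IsOpen (playV S x U n) ∧ x n ∈ playV S x U n ∧ playV S x U n ⊆ U n ∧ playV S x U n ∈ B) ∧
  ∀ x U, LegalPlayIn B S x U → (fun n => playV S x U n) ∈ P

/-- A family of sets is open-finite if each member has only finitely many supersets
in the family. -/
def IsOpenFinite (B : Set (Set X)) : Prop := ∀ U ∈ B, {V ∈ B | U ⊆ V}.Finite

/-- A family is uniform if for every `x ∈ U ∈ B` only finitely many members of `B`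
containing `x` fail to be subsets of `U`. -/
def IsUniformFamily (B : Set (Set X)) : Prop :=
  ∀ (x : X), ∀ U ∈ B, x ∈ U → {V ∈ B | x ∈ V ∧ ¬ V ⊆ U}.Finite

/-- A family is Noetherian if it satisfies the ascending chain condition. -/
def IsNoetherianFamily (B : Set (Set X)) : Prop :=
  ∀ f : ℕ → Set X, (∀ n, f n ∈ B) → (∀ n, f n ⊆ f (n + 1)) → ∃ N, ∀ n, N ≤ n → f n = f N

/-- A basis is of countable order: every infinite strictly descending chain of members
of `B` around a point `x` is a neighborhood basis at `x`. -/
def CountableOrderBasis [TopologicalSpace X] (B : Set (Set X)) : Prop :=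
  ∀ (x : X) (V : ℕ → Set X), (∀ n, V n ∈ B ∧ x ∈ V n ∧ V (n + 1) ⊂ V n) →
    ∀ W : Set X, IsOpen W → x ∈ W → ∃ n, V n ⊆ W

/-- Metacompactness: every open cover has a point-finite open refinement. -/
def MetacompactSpace (Y : Type*) [TopologicalSpace Y] : Prop :=
  ∀ 𝒰 : Set (Set Y), (∀ U ∈ 𝒰, IsOpen U) → ⋃₀ 𝒰 = univ →
    ∃ 𝒱 : Set (Set Y), (∀ V ∈ 𝒱, IsOpen V) ∧ ⋃₀ 𝒱 = univ ∧
      (∀ V ∈ 𝒱, ∃ U ∈ 𝒰, V ⊆ U) ∧ ∀ y : Y, {V ∈ 𝒱 | y ∈ V}.Finite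

lemma finite_range_diff_diff_singleton (U : Set X) {F : Set X} (hF : F.Finite) :
    (range fun p => U \ (F \ {p})).Finite := by
  refine ((hF.image fun q => U \ (F \ {q})).insert (U \ F)).subset ?_
  rintro _ ⟨p, rfl⟩
  by_cases hp : p ∈ F
  · exact mem_insert_of_mem _ (mem_image_of_mem _ hp)
  · simp only [sdiff_singleton_eq_self hp]
    exact mem_insert _ _

lemma le_of_subset_diff_image_Iio_diff {c : ℕ → X} {V U : Set X} {m k : ℕ} {p : X}
    (hV : V ⊆ U \ (c '' Iio m \ {p})) (hk : c k ∈ V) (hkp : c k ≠ p) : m ≤ k := by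
  by_contra! hkm
  exact (hV hk).2 ⟨mem_image_of_mem c hkm, hkp⟩

section

variable [TopologicalSpace X]

lemma DenseRange.exists_forall_exists_le_mem_ne [T1Space X] {c : ℕ → X} (hc : DenseRange c)
    {V : Set X} (hV : IsOpen V) (hne : V.Nonempty) :
    ∃ N, ∀ p : X, ¬IsOpen ({p} : Set X) → ∃ k ≤ N, c k ∈ V ∧ c k ≠ p := by
  by_cases hiso : ∃ x ∈ V, IsOpen ({x} : Set X)
  · obtain ⟨x, hxV, hx⟩ := hiso
    obtain ⟨k, rfl⟩ : ∃ k, c k = x := by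
      simpa using hc.exists_mem_open hx (singleton_nonempty x)
    exact ⟨k, fun p hp => ⟨k, le_rfl, hxV, by rintro rfl; exact hp hx⟩⟩
  · push Not at hiso
    have hVnt : V.Nontrivial := by
      refine not_subsingleton_iff.mp fun hsub => ?_
      obtain ⟨x, hxV⟩ := hne
      exact hiso x hxV (hsub.eq_singleton_of_mem hxV ▸ hV)
    obtain ⟨k₁, hk₁⟩ := hc.exists_mem_open hV hne
    obtain ⟨k₂, hk₂, hk₂₁⟩ := hc.exists_mem_open (hV.sdiff isClosed_singleton)
      (hVnt.exists_ne (c k₁))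
    refine ⟨max k₁ k₂, fun p _ => ?_⟩
    by_cases hp : c k₁ = p
    · exact ⟨k₂, le_max_right _ _, hk₂, hp ▸ hk₂₁⟩
    · exact ⟨k₁, le_max_left _ _, hk₁, hp⟩

def openFiniteBasis (u : ℕ → Set X) (c : ℕ → X) : Set (Set X) :=
  {V | ∃ x, IsOpen ({x} : Set X) ∧ V = {x}} ∪
    {V | ∃ n p, p ∈ u n ∧ ¬IsOpen ({p} : Set X) ∧ V = u n \ (c '' Iio n \ {p})}

variable {u : ℕ → Set X} {c : ℕ → X}

lemma nonempty_of_mem_openFiniteBasis {V : Set X} (hV : V ∈ openFiniteBasis u c) :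
    V.Nonempty := by
  rcases hV with ⟨x, -, rfl⟩ | ⟨n, p, hp, -, rfl⟩
  · exact singleton_nonempty x
  · exact ⟨p, hp, fun h => h.2 rfl⟩

lemma isOpen_of_mem_openFiniteBasis [T1Space X] (hu : ∀ n, IsOpen (u n)) {V : Set X}
    (hV : V ∈ openFiniteBasis u c) : IsOpen V := by
  rcases hV with ⟨x, hx, rfl⟩ | ⟨n, p, -, -, rfl⟩
  · exact hx
  · exact (hu n).sdiff (((finite_Iio n).image c).sdiff.isClosed)

lemma countable_openFiniteBasis (hc : DenseRange c) : (openFiniteBasis u c).Countable := by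
  refine Countable.union ?_ ?_
  · refine (countable_range fun k => ({c k} : Set X)).mono ?_
    rintro _ ⟨x, hx, rfl⟩
    obtain ⟨k, hk⟩ := hc.exists_mem_open hx (singleton_nonempty x)
    exact ⟨k, congrArg _ hk⟩
  · refine (countable_iUnion fun n =>
      (finite_range_diff_diff_singleton (u n) ((finite_Iio n).image c)).countable).mono ?_
    rintro _ ⟨n, p, -, -, rfl⟩
    exact mem_iUnion.mpr ⟨n, p, rfl⟩

lemma isTopologicalBasis_openFiniteBasis [T1Space X] (hu : IsTopologicalBasis (range u)) :
    IsTopologicalBasis (openFiniteBasis u c) := by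
  refine isTopologicalBasis_of_isOpen_of_nhds
    (fun V => isOpen_of_mem_openFiniteBasis fun n => hu.isOpen (mem_range_self n)) ?_
  intro a O haO hO
  by_cases ha : IsOpen ({a} : Set X)
  · exact ⟨{a}, Or.inl ⟨a, ha, rfl⟩, rfl, singleton_subset_iff.mpr haO⟩
  · obtain ⟨_, ⟨n, rfl⟩, han, hnO⟩ := hu.exists_subset_of_mem_open haO hO
    exact ⟨_, Or.inr ⟨n, a, han, ha, rfl⟩, ⟨han, fun h => h.2 rfl⟩, sdiff_subset.trans hnO⟩

lemma isOpenFinite_openFiniteBasis [T1Space X] (hu : ∀ n, IsOpen (u n)) (hc : DenseRange c) :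
    IsOpenFinite (openFiniteBasis u c) := by
  intro V hV
  have hVne := nonempty_of_mem_openFiniteBasis hV
  obtain ⟨N, hN⟩ :=
    hc.exists_forall_exists_le_mem_ne (isOpen_of_mem_openFiniteBasis hu hV) hVne
  have hsub : {W ∈ openFiniteBasis u c | V ⊆ W} ⊆
      {V} ∪ ⋃ m ∈ Iic N, range fun p => u m \ (c '' Iio m \ {p}) := by
    rintro W ⟨⟨x, -, rfl⟩ | ⟨m, p, -, hp, rfl⟩, hVW⟩
    · exact Or.inl ((subset_singleton_iff_eq.mp hVW).resolve_left hVne.ne_empty).symm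
    · obtain ⟨k, hkN, hkV, hkp⟩ := hN p hp
      exact Or.inr (mem_biUnion
        ((le_of_subset_diff_image_Iio_diff hVW hkV hkp).trans hkN) ⟨p, rfl⟩)
  refine ((finite_singleton V).union ((finite_Iic N).biUnion fun m _ => ?_)).subset hsub
  exact finite_range_diff_diff_singleton _ ((finite_Iio m).image c)

end

/-- Every second countable T1 space has a countable open-finite basis. -/
theorem stmt0 (X : Type*) [TopologicalSpace X] [SecondCountableTopology X] [T1Space X] :
    ∃ B : Set (Set X), B.Countable ∧ IsTopologicalBasis B ∧ IsOpenFinite B := by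
  rcases isEmpty_or_nonempty X with _ | _
  · refine ⟨∅, countable_empty, ?_, fun U hU => hU.elim⟩
    exact isTopologicalBasis_of_isOpen_of_nhds (by simp) fun a => isEmptyElim a
  obtain ⟨b, hbc, -, hb⟩ := exists_countable_basis X
  obtain ⟨u, rfl⟩ := hbc.exists_eq_range (.of_sUnion_eq_univ hb.sUnion_eq)
  obtain ⟨c, hc⟩ := exists_dense_seq X
  exact ⟨openFiniteBasis u c, countable_openFiniteBasis hc, isTopologicalBasis_openFiniteBasis hb,
    isOpenFinite_openFiniteBasis (fun n => hb.isOpen (mem_range_self n)) hc⟩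
end

section
/- If a T1 space has a nondiscrete topology and a countable basis enumerated as ⟨U_i⟩ without repetitions such that each U_i is either a singleton or infinite, then one can choose points x_i and sets V_i with V_i = U_i when U_i is a singleton and V_i = U_i \ {x_j : j < i} otherwise, so that each V_i has at most i+1 supersets in {V_i : i < ω}. -/
open TopologicalSpace Set

universe u

variable {X : Type*}

/-- A stationary strategy only depends on Empty's last move. -/
def NIsStationary (S : NStrategy X) : Prop := ∀ h m, S h m = S [] m

/-!
Choose `x i ∈ U i` recursively, avoiding the earlier points whenever possible; this is always
possible when `U i` is infinite. If `V i ⊆ V j` with `i < j`, then `x i ∈ V j`, so `V j` cannot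
be `U j` minus the earlier points: it is a singleton, hence equal to `V i`. So every superset
of `V i` in the family is one of `V 0, …, V i`.
-/

section AvoidingSeq

variable (U : ℕ → Set X) (hne : ∀ i, (U i).Nonempty)

open Classical in
noncomputable def avoidingSeq : ℕ → X
  | i =>
    if h : (U i \ range fun j : Fin i => avoidingSeq j).Nonempty then h.some else (hne i).some
  decreasing_by exact j.2

theorem avoidingSeq_mem (i : ℕ) : avoidingSeq U hne i ∈ U i := by
  rw [avoidingSeq]
  split_ifs with h
  exacts [h.some_mem.1, (hne i).some_mem]

theorem avoidingSeq_mem_diff {i : ℕ}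
    (h : (U i \ {y | ∃ j < i, y = avoidingSeq U hne j}).Nonempty) :
    avoidingSeq U hne i ∈ U i \ {y | ∃ j < i, y = avoidingSeq U hne j} := by
  have hprev : (range fun j : Fin i => avoidingSeq U hne j) =
      {y | ∃ j < i, y = avoidingSeq U hne j} := by
    ext y
    exact ⟨fun ⟨j, hj⟩ => ⟨j, j.2, hj.symm⟩, fun ⟨j, hj, hy⟩ => ⟨⟨j, hj⟩, hy.symm⟩⟩
  rw [avoidingSeq, ← hprev, dif_pos (hprev ▸ h)]
  exact (hprev ▸ h).some_mem

end AvoidingSeq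

theorem supersets_subset_image_Iic {V : ℕ → Set X} {x : ℕ → X} (hx : ∀ i, x i ∈ V i)
    (hV : ∀ j, (V j).Subsingleton ∨ ∀ i < j, x i ∉ V j) (i : ℕ) :
    {W ∈ range V | V i ⊆ W} ⊆ V '' Iic i := by
  rintro _ ⟨⟨j, rfl⟩, hij⟩
  rcases le_or_gt j i with hji | hij'
  · exact ⟨j, hji, rfl⟩
  · refine ⟨i, mem_Iic.2 le_rfl, hij.antisymm fun y hy => ?_⟩
    rcases hV j with hsub | hfresh
    · exact hsub hy (hij (hx i)) ▸ hx i
    · exact absurd (hij (hx i)) (hfresh i hij')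

theorem finite_supersets_and_ncard_le {V : ℕ → Set X} {x : ℕ → X} (hx : ∀ i, x i ∈ V i)
    (hV : ∀ j, (V j).Subsingleton ∨ ∀ i < j, x i ∉ V j) (i : ℕ) :
    {W ∈ range V | V i ⊆ W}.Finite ∧ {W ∈ range V | V i ⊆ W}.ncard ≤ i + 1 := by
  have hsub := supersets_subset_image_Iic hx hV i
  have hfin : (V '' Iic i).Finite := (finite_Iic i).image V
  refine ⟨hfin.subset hsub, ?_⟩
  calc {W ∈ range V | V i ⊆ W}.ncard ≤ (V '' Iic i).ncard := ncard_le_ncard hsub hfin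
    _ ≤ (Iic i).ncard := ncard_image_le (finite_Iic i)
    _ = i + 1 := ncard_Iic_nat i

theorem stmt2_general (X : Type*)
    (U : ℕ → Set X)
    (hsinginf : ∀ i, (∃ a, U i = {a}) ∨ (U i).Infinite) :
    ∃ (x : ℕ → X) (V : ℕ → Set X),
      (∀ i a, U i = {a} → x i = a ∧ V i = U i) ∧
      (∀ i, (U i).Infinite → x i ∈ V i ∧ V i = U i \ {y | ∃ j < i, y = x j}) ∧
      (∀ i, {W ∈ Set.range V | V i ⊆ W}.Finite ∧
        {W ∈ Set.range V | V i ⊆ W}.ncard ≤ i + 1) := by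
  classical
  have hne i : (U i).Nonempty := by
    rcases hsinginf i with ⟨a, ha⟩ | hinf
    exacts [ha ▸ singleton_nonempty a, hinf.nonempty]
  set x := avoidingSeq U hne
  set V : ℕ → Set X := fun i => if (U i).Infinite then U i \ {y | ∃ j < i, y = x j} else U i
  have hprev_finite i : {y | ∃ j < i, y = x j}.Finite :=
    ((finite_lt_nat i).image x).subset fun _ ⟨j, hj, hy⟩ => ⟨j, hj, hy.symm⟩
  have hdiff {i} (hinf : (U i).Infinite) : V i = U i \ {y | ∃ j < i, y = x j} := if_pos hinf
  have hfresh {i} (hinf : (U i).Infinite) : x i ∈ V i :=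
    hdiff hinf ▸ avoidingSeq_mem_diff U hne (hinf.sdiff (hprev_finite i)).nonempty
  have hsing {i a} (ha : U i = {a}) : x i = a ∧ V i = U i :=
    ⟨mem_singleton_iff.1 (ha ▸ avoidingSeq_mem U hne i),
      if_neg (ha ▸ finite_singleton a).not_infinite⟩
  have hx i : x i ∈ V i := by
    rcases hsinginf i with ⟨a, ha⟩ | hinf
    · rw [(hsing ha).2, ha, (hsing ha).1]
      exact mem_singleton a
    · exact hfresh hinf
  have hV j : (V j).Subsingleton ∨ ∀ i < j, x i ∉ V j := by
    rcases hsinginf j with ⟨a, ha⟩ | hinf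
    · exact .inl ((hsing ha).2 ▸ ha ▸ subsingleton_singleton)
    · exact .inr fun i hij hxi => (hdiff hinf ▸ hxi).2 ⟨i, hij, rfl⟩
  exact ⟨x, V, fun i a ha => hsing ha, fun i hinf => ⟨hfresh hinf, hdiff hinf⟩,
    finite_supersets_and_ncard_le hx hV⟩

/-- The inductive construction in Proposition 1.7: from an injective enumeration of a
basis of a nondiscrete T1 space, each set a singleton or infinite, one can choose
points `x i` and sets `V i` (removing earlier chosen points) so that each `V i` has
at most `i + 1` supersets among the `V j`'s. -/
theorem stmt2 (X : Type*) [TopologicalSpace X] [T1Space X]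
    (hnd : ¬ DiscreteTopology X)
    (U : ℕ → Set X) (hinj : Function.Injective U)
    (hbasis : IsTopologicalBasis (Set.range U))
    (hsinginf : ∀ i, (∃ a, U i = {a}) ∨ (U i).Infinite) :
    ∃ (x : ℕ → X) (V : ℕ → Set X),
      (∀ i a, U i = {a} → x i = a ∧ V i = U i) ∧
      (∀ i, (U i).Infinite → x i ∈ V i ∧ V i = U i \ {y | ∃ j < i, y = x j}) ∧
      (∀ i, {W ∈ Set.range V | V i ⊆ W}.Finite ∧
        {W ∈ Set.range V | V i ⊆ W}.ncard ≤ i + 1) :=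
  stmt2_general X U hsinginf
end

section
/- Let ⟨P(k)⟩_{k<ω} be invariant properties of descending sequences of open subsets of a space X, and let P = ⋂_k P(k). If Nonempty has a winning strategy in the generalized Choquet game Ch_{P(k)}(X) for each k, then Nonempty has a winning strategy in Ch_P(X). -/
open TopologicalSpace Set

universe u

variable {X : Type*}

/-! Nonempty runs the `k`-th winning strategy in a copy of the game that starts at round `k`;
in that copy Empty's moves are the answers of strategy `k - 1`. At round `n` the answers are
computed in a cascade `U n ⊇ W₁ ⊇ ⋯ ⊇ W_{n+1}`, and Nonempty plays `W_{n+1}`. Legality of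
Empty's play forces every copy to be a legal play, so the answers of copy `k` satisfy `P k`;
they are cofinal with Nonempty's actual moves, and invariance transfers `P k` to the latter. -/

/-- `cascade T x U k i` is the answer of strategy `k - 1` at round `i`, where strategy `r`
plays the game starting at round `r` against the answers of strategy `r - 1`
(and strategy `-1` is Empty's play `U`). -/
def cascade (T : ℕ → NStrategy X) (x : ℕ → X) (U : ℕ → Set X) : ℕ → ℕ → Set X
  | 0, i => U i
  | k + 1, i =>
      T k ((List.range (i - k)).map fun j => (x (k + j), cascade T x U k (k + j)))
        (x i, cascade T x U k i)

lemma cascade_congr (T : ℕ → NStrategy X) {x x' : ℕ → X} {U U' : ℕ → Set X} (k : ℕ)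
    {i : ℕ} (h : ∀ j ≤ i, x j = x' j ∧ U j = U' j) :
    cascade T x U k i = cascade T x' U' k i := by
  induction k generalizing i with
  | zero => exact (h i le_rfl).2
  | succ k ih =>
    have hhist : ∀ j ∈ List.range (i - k),
        (x (k + j), cascade T x U k (k + j)) = (x' (k + j), cascade T x' U' k (k + j)) :=
      fun j hj => by
        have hj : k + j < i := by have := List.mem_range.1 hj; omega
        rw [(h _ hj.le).1, ih fun j' hj' => h j' (by omega)]
    simp only [cascade, List.map_congr_left hhist, (h i le_rfl).1, ih h]

lemma playV_cascade (T : ℕ → NStrategy X) (x : ℕ → X) (U : ℕ → Set X) (k j : ℕ) :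
    playV (T k) (fun j => x (k + j)) (fun j => cascade T x U k (k + j)) j
      = cascade T x U (k + 1) (k + j) := by
  simp only [playV, cascade, Nat.add_sub_cancel_left]

lemma cascade_antitone {T : ℕ → NStrategy X} (hT : ∀ k h m, T k h m ⊆ m.2)
    (x : ℕ → X) (U : ℕ → Set X) (i : ℕ) : Antitone fun k => cascade T x U k i :=
  antitone_nat_of_succ_le fun k => hT k _ (x i, cascade T x U k i)

namespace NStrategy

/-- At round `n` the diagonal strategy plays the answer of strategy `n`, the last one started. -/
def diagonal (T : ℕ → NStrategy X) : NStrategy X := fun h m =>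
  cascade T (fun i => ((h ++ [m]).getD i m).1) (fun i => ((h ++ [m]).getD i m).2)
    (h.length + 1) h.length

lemma playV_diagonal (T : ℕ → NStrategy X) (x : ℕ → X) (U : ℕ → Set X) (n : ℕ) :
    playV (diagonal T) x U n = cascade T x U (n + 1) n := by
  have hmoves : (List.range n).map (fun i => (x i, U i)) ++ [(x n, U n)]
      = (List.range (n + 1)).map fun i => (x i, U i) := by
    rw [List.range_succ, List.map_append, List.map_singleton]
  simp only [playV, diagonal, List.length_map, List.length_range, hmoves]
  refine cascade_congr T _ fun j hj => ?_
  rw [List.getD_eq_getElem _ _ (by simpa using Nat.lt_succ_of_le hj)]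
  simp

variable [TopologicalSpace X]

open Classical in
/-- Replacing invalid answers by `∅` makes the cascade descending before we know that the
copies are legal plays. -/
noncomputable def guard (S : NStrategy X) : NStrategy X := fun h m =>
  if IsOpen (S h m) ∧ m.1 ∈ S h m ∧ S h m ⊆ m.2 then S h m else ∅

lemma guard_subset (S : NStrategy X) (h : List (X × Set X)) (m : X × Set X) :
    S.guard h m ⊆ m.2 := by
  unfold guard
  split_ifs with hvalid
  exacts [hvalid.2.2, empty_subset _]

lemma playV_guard_of_nonempty {S : NStrategy X} {x : ℕ → X} {U : ℕ → Set X} {n : ℕ}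
    (hne : (playV S.guard x U n).Nonempty) :
    playV S.guard x U n = playV S x U n ∧ IsOpen (playV S x U n) ∧ x n ∈ playV S x U n := by
  unfold playV guard at *
  split_ifs at * with hvalid
  · exact ⟨rfl, hvalid.1, hvalid.2.1⟩
  · exact absurd hne not_nonempty_empty

noncomputable def interleave (S : ℕ → NStrategy X) : NStrategy X :=
  diagonal fun k => (S k).guard

end NStrategy

open NStrategy

lemma cascade_guard_antitone [TopologicalSpace X] (S : ℕ → NStrategy X) (x : ℕ → X)
    (U : ℕ → Set X) (i : ℕ) :
    Antitone fun k => cascade (fun k => (S k).guard) x U k i :=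
  cascade_antitone (fun k => (S k).guard_subset) x U i

lemma cascade_guard_subset [TopologicalSpace X] (S : ℕ → NStrategy X) (x : ℕ → X)
    (U : ℕ → Set X) (k i : ℕ) :
    cascade (fun k => (S k).guard) x U k i ⊆ U i :=
  cascade_guard_antitone S x U i (Nat.zero_le k)

section LegalPlay

variable [TopologicalSpace X] {S : ℕ → NStrategy X} {x : ℕ → X} {U : ℕ → Set X}

variable (hleg : LegalPlay (interleave S) x U)
include hleg

lemma subset_cascade_guard {k i : ℕ} (hk : k ≤ i) :
    U (i + 1) ⊆ cascade (fun k => (S k).guard) x U (k + 1) i := by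
  have hnext := (hleg i).2.2
  rw [interleave, playV_diagonal] at hnext
  exact hnext.trans (cascade_guard_antitone S x U i (by omega))

/-- Empty's next point `x (k + j + 1)` witnesses that the guard never fires in copy `k`. -/
lemma playV_shift_eq_cascade (k j : ℕ) :
    playV (S k) (fun j => x (k + j)) (fun j => cascade (fun k => (S k).guard) x U k (k + j)) j
        = cascade (fun k => (S k).guard) x U (k + 1) (k + j) ∧
      IsOpen (cascade (fun k => (S k).guard) x U (k + 1) (k + j)) ∧
      x (k + j) ∈ cascade (fun k => (S k).guard) x U (k + 1) (k + j) := by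
  have hne : (cascade (fun k => (S k).guard) x U (k + 1) (k + j)).Nonempty :=
    ⟨x (k + j + 1), subset_cascade_guard hleg (Nat.le_add_right k j) (hleg _).2.1⟩
  rw [← playV_cascade] at hne ⊢
  obtain ⟨heq, hopen, hmem⟩ := playV_guard_of_nonempty hne
  exact ⟨heq.symm, heq ▸ hopen, heq ▸ hmem⟩

lemma isOpen_and_mem_cascade_guard {k i : ℕ} (hk : k ≤ i + 1) :
    IsOpen (cascade (fun k => (S k).guard) x U k i) ∧
      x i ∈ cascade (fun k => (S k).guard) x U k i := by
  cases k with
  | zero => exact ⟨(hleg i).1, (hleg i).2.1⟩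
  | succ k =>
    obtain ⟨-, hopen, hmem⟩ := playV_shift_eq_cascade hleg k (i - k)
    rw [Nat.add_sub_cancel' (by omega)] at hopen hmem
    exact ⟨hopen, hmem⟩

lemma legalPlay_shift (k : ℕ) :
    LegalPlay (S k) (fun j => x (k + j)) fun j => cascade (fun k => (S k).guard) x U k (k + j) :=
  fun j => by
    obtain ⟨hopen, hmem⟩ := isOpen_and_mem_cascade_guard hleg (k := k) (i := k + j) (by omega)
    refine ⟨hopen, hmem, ?_⟩
    rw [(playV_shift_eq_cascade hleg k j).1]
    exact (cascade_guard_subset S x U k _).trans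
      (subset_cascade_guard hleg (Nat.le_add_right k j))

lemma seqEquiv_shift (k : ℕ) :
    SeqEquiv (fun n => cascade (fun k => (S k).guard) x U (n + 1) n)
      (fun j => cascade (fun k => (S k).guard) x U (k + 1) (k + j)) := by
  have hanti : Antitone fun n => cascade (fun k => (S k).guard) x U (n + 1) n :=
    antitone_nat_of_succ_le fun n =>
      (cascade_guard_subset S x U _ _).trans (subset_cascade_guard hleg le_rfl)
  refine ⟨fun j => ⟨k + j, cascade_guard_antitone S x U _ (by omega)⟩,
    fun n => ⟨n + 1, ?_⟩⟩
  calc cascade (fun k => (S k).guard) x U (k + 1) (k + (n + 1))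
      ⊆ U (k + n + 1) := cascade_guard_subset S x U _ _
    _ ⊆ cascade (fun k => (S k).guard) x U (k + n + 1) (k + n) :=
      subset_cascade_guard hleg le_rfl
    _ ⊆ cascade (fun k => (S k).guard) x U (n + 1) n := hanti (Nat.le_add_left n k)

end LegalPlay

lemma validStrategy_interleave [TopologicalSpace X] (S : ℕ → NStrategy X) :
    ValidStrategy (interleave S) := fun x U hleg n => by
  obtain ⟨hopen, hmem⟩ := isOpen_and_mem_cascade_guard hleg (k := n + 1) le_rfl
  rw [interleave, playV_diagonal]
  exact ⟨hopen, hmem, cascade_guard_subset S x U _ _⟩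

/-- If Nonempty has a winning strategy in `Ch_{P k}(X)` for each of countably many
invariant properties `P k`, then Nonempty has a winning strategy in the game for
their intersection. -/
theorem stmt7 (X : Type*) [TopologicalSpace X] (P : ℕ → Set (ℕ → Set X))
    (hinv : ∀ k, InvariantProp (P k))
    (hwin : ∀ k, ∃ S : NStrategy X, WinningStrategy S (P k)) :
    ∃ S : NStrategy X, WinningStrategy S (⋂ k, P k) := by
  choose S hS using hwin
  refine ⟨interleave S, validStrategy_interleave S,
    fun x U hleg => mem_iInter.2 fun k => ?_⟩
  have hcopy := (hS k).2 _ _ (legalPlay_shift hleg k)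
  simp only [fun j => (playV_shift_eq_cascade hleg k j).1] at hcopy
  simp only [interleave, playV_diagonal]
  exact hinv k _ _ (seqEquiv_shift hleg k) hcopy
end

section
/- If Nonempty has a winning strategy in the Choquet game Ch(Z) and there is an open continuous surjection f : Z → X, then Nonempty has a winning strategy in Ch(X). In particular, any open continuous image of a Choquet space is a Choquet space. -/
open TopologicalSpace Set

universe u

variable {X : Type*}

/-! Nonempty plays `Ch(X)` by shadowing a play of `Ch(Z)`: Empty's move `(x, U)` is lifted to
`(z, f ⁻¹' U ∩ V')`, where `V'` is the previous answer of the winning strategy `S` in `Z` and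
`f z = x`; the answer `V` of `S` is then pushed forward to `f '' V`. Continuity of `f` makes the
lifted moves legal, openness of `f` makes the pushed answers legal, and a point in the
intersection of the answers in `Z` maps into the intersection of the answers in `X`. A suitable
`z` exists because `x ∈ U` lies in the previous pushed answer `f '' V'` (in the first round, by
surjectivity). -/

namespace NStrategy

variable {Z Y : Type*} [TopologicalSpace Z]

/-- The interior is taken so that the lifted moves are open before we know that the lifted play
is legal, which is what makes the answers of `S` open. -/
def lastAnswer (S : NStrategy Z) (l : List (Z × Set Z)) : Set Z :=
  match l.getLast? with
  | none => univ
  | some m => interior (S l.dropLast m)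

noncomputable def liftMove [Nonempty Z] (f : Z → Y) (S : NStrategy Z) (l : List (Z × Set Z))
    (m : Y × Set Y) : Z × Set Z :=
  let W := f ⁻¹' m.2 ∩ S.lastAnswer l
  (Classical.epsilon fun z => z ∈ W ∧ f z = m.1, W)

noncomputable def liftHistory [Nonempty Z] (f : Z → Y) (S : NStrategy Z)
    (h : List (Y × Set Y)) : List (Z × Set Z) :=
  h.foldl (fun l m => l ++ [liftMove f S l m]) []

noncomputable def pushforward [Nonempty Z] (f : Z → Y) (S : NStrategy Z) : NStrategy Y :=
  fun h m => f '' interior (S (liftHistory f S h) (liftMove f S (liftHistory f S h) m))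

noncomputable def liftPlay [Nonempty Z] (f : Z → Y) (S : NStrategy Z) (x : ℕ → Y)
    (U : ℕ → Set Y) (n : ℕ) : Z × Set Z :=
  liftMove f S (liftHistory f S ((List.range n).map fun i => (x i, U i))) (x n, U n)

section Lift

variable [Nonempty Z] (f : Z → Y) (S : NStrategy Z) (x : ℕ → Y) (U : ℕ → Set Y)

theorem liftHistory_concat (h : List (Y × Set Y)) (m : Y × Set Y) :
    liftHistory f S (h ++ [m]) = liftHistory f S h ++ [liftMove f S (liftHistory f S h) m] := by
  simp only [liftHistory, List.foldl_append, List.foldl_cons, List.foldl_nil]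

theorem liftHistory_range (n : ℕ) :
    liftHistory f S ((List.range n).map fun i => (x i, U i)) =
      (List.range n).map (liftPlay f S x U) := by
  induction n with
  | zero => rfl
  | succ n ih =>
    rw [List.range_succ, List.map_append, List.map_singleton, liftHistory_concat,
      List.map_append, List.map_singleton, ← ih]
    rfl

theorem playV_liftPlay (n : ℕ) :
    playV S (Prod.fst ∘ liftPlay f S x U) (Prod.snd ∘ liftPlay f S x U) n =
      S ((List.range n).map (liftPlay f S x U)) (liftPlay f S x U n) := by
  simp only [playV, Function.comp_apply, Prod.mk.eta]

theorem playV_pushforward (n : ℕ) :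
    playV (pushforward f S) x U n =
      f '' interior (playV S (Prod.fst ∘ liftPlay f S x U) (Prod.snd ∘ liftPlay f S x U) n) := by
  rw [playV_liftPlay, ← liftHistory_range]
  rfl

theorem liftPlay_snd_zero : (liftPlay f S x U 0).2 = f ⁻¹' U 0 :=
  inter_univ _

theorem liftPlay_snd_succ (n : ℕ) :
    (liftPlay f S x U (n + 1)).2 = f ⁻¹' U (n + 1) ∩
      interior (playV S (Prod.fst ∘ liftPlay f S x U) (Prod.snd ∘ liftPlay f S x U) n) := by
  rw [playV_liftPlay, ← liftHistory_range]
  simp only [liftPlay, liftMove, List.range_succ, List.map_append, List.map_singleton,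
    liftHistory_concat, lastAnswer, List.getLast?_concat, List.dropLast_concat]

theorem liftPlay_snd_subset (n : ℕ) : (liftPlay f S x U n).2 ⊆ f ⁻¹' U n :=
  inter_subset_left

variable [TopologicalSpace Y]

theorem exists_mem_liftPlay_snd (hsurj : Function.Surjective f)
    (hL : LegalPlay (pushforward f S) x U) (n : ℕ) :
    ∃ z ∈ (liftPlay f S x U n).2, f z = x n := by
  cases n with
  | zero =>
    obtain ⟨z, hz⟩ := hsurj (x 0)
    exact ⟨z, by rw [liftPlay_snd_zero, mem_preimage, hz]; exact (hL 0).2.1, hz⟩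
  | succ n =>
    have hx : x (n + 1) ∈ playV (pushforward f S) x U n := (hL n).2.2 (hL (n + 1)).2.1
    rw [playV_pushforward] at hx
    obtain ⟨z, hz, hfz⟩ := hx
    refine ⟨z, ?_, hfz⟩
    rw [liftPlay_snd_succ]
    exact ⟨by rw [mem_preimage, hfz]; exact (hL (n + 1)).2.1, hz⟩

theorem liftPlay_fst_spec (hsurj : Function.Surjective f)
    (hL : LegalPlay (pushforward f S) x U) (n : ℕ) :
    (liftPlay f S x U n).1 ∈ (liftPlay f S x U n).2 ∧ f (liftPlay f S x U n).1 = x n := by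
  obtain ⟨z, hz, hfz⟩ := exists_mem_liftPlay_snd f S x U hsurj hL n
  exact Classical.epsilon_spec (p := fun z => z ∈ (liftPlay f S x U n).2 ∧ f z = x n) ⟨z, hz, hfz⟩

theorem legalPlay_liftPlay (hcont : Continuous f) (hsurj : Function.Surjective f)
    (hL : LegalPlay (pushforward f S) x U) :
    LegalPlay S (Prod.fst ∘ liftPlay f S x U) (Prod.snd ∘ liftPlay f S x U) := by
  intro n
  refine ⟨?_, (liftPlay_fst_spec f S x U hsurj hL n).1, ?_⟩
  · cases n with
    | zero => simpa only [Function.comp_apply, liftPlay_snd_zero] using (hL 0).1.preimage hcont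
    | succ n =>
      simp only [Function.comp_apply, liftPlay_snd_succ]
      exact ((hL (n + 1)).1.preimage hcont).inter isOpen_interior
  · simp only [Function.comp_apply, liftPlay_snd_succ]
    exact inter_subset_right.trans interior_subset

end Lift

variable [TopologicalSpace Y]

theorem winningStrategy_pushforward [Nonempty Z] {f : Z → Y} {S : NStrategy Z}
    (hcont : Continuous f) (hopen : IsOpenMap f) (hsurj : Function.Surjective f)
    (hS : WinningStrategy S (ChoquetWin Z)) :
    WinningStrategy (pushforward f S) (ChoquetWin Y) := by
  have hpush : ∀ x U, LegalPlay (pushforward f S) x U → ∀ n,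
      playV (pushforward f S) x U n =
        f '' playV S (Prod.fst ∘ liftPlay f S x U) (Prod.snd ∘ liftPlay f S x U) n :=
    fun x U hL n => by
      rw [playV_pushforward,
        (hS.1 _ _ (legalPlay_liftPlay f S x U hcont hsurj hL) n).1.interior_eq]
  refine ⟨fun x U hL n => ?_, fun x U hL => ?_⟩
  · obtain ⟨hopenV, hmemV, hsubV⟩ := hS.1 _ _ (legalPlay_liftPlay f S x U hcont hsurj hL) n
    rw [hpush x U hL n]
    refine ⟨hopen _ hopenV, ⟨_, hmemV, (liftPlay_fst_spec f S x U hsurj hL n).2⟩, ?_⟩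
    exact image_subset_iff.2 (hsubV.trans (liftPlay_snd_subset f S x U n))
  · obtain ⟨z, hz⟩ := hS.2 _ _ (legalPlay_liftPlay f S x U hcont hsurj hL)
    refine ⟨f z, mem_iInter.2 fun n => ?_⟩
    rw [hpush x U hL n]
    exact mem_image_of_mem f (mem_iInter.1 hz n)

end NStrategy

theorem winningStrategy_of_isEmpty [TopologicalSpace X] [IsEmpty X] (S : NStrategy X)
    (P : Set (ℕ → Set X)) : WinningStrategy S P :=
  ⟨fun x => isEmptyElim (x 0), fun x => isEmptyElim (x 0)⟩

/-- Any open continuous image of a Choquet space is a Choquet space. -/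
theorem stmt13 (Z X : Type*) [TopologicalSpace Z] [TopologicalSpace X]
    (f : Z → X) (hcont : Continuous f) (hopen : IsOpenMap f)
    (hsurj : Function.Surjective f)
    (hZ : ∃ S : NStrategy Z, WinningStrategy S (ChoquetWin Z)) :
    ∃ S : NStrategy X, WinningStrategy S (ChoquetWin X) := by
  obtain ⟨S, hS⟩ := hZ
  cases isEmpty_or_nonempty X with
  | inl _ => exact ⟨fun _ _ => ∅, winningStrategy_of_isEmpty _ _⟩
  | inr _ =>
    have : Nonempty Z := hsurj.nonempty
    exact ⟨S.pushforward f, NStrategy.winningStrategy_pushforward hcont hopen hsurj hS⟩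
end

section
/- If a T1 space X has a basis of countable order, then Nonempty has a stationary convergent strategy in the Choquet game Ch(X) (not necessarily winning). -/
open TopologicalSpace Set

universe u

variable {X : Type*}

/-!
Nonempty answers a move `(x, U)` by some `V ∈ B` with `x ∈ V ⊊ U`, and by `U` itself when no such
`V` exists. If every answer of a play is strict, the answers form a strictly descending chain in
`B` around each point of their intersection, hence a neighbourhood basis there because `B` has
countable order. Otherwise some `U n` has no proper basic subset containing `x n`; in a T1 space
this forces `U n = {x n}`, and then the answer `{x n}` is contained in every neighbourhood of the
unique point of the intersection.
-/

theorem TopologicalSpace.IsTopologicalBasis.exists_mem_ssubset_of_ne_singleton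
    [TopologicalSpace X] [T1Space X] {B : Set (Set X)} (hB : IsTopologicalBasis B)
    {x : X} {U : Set X} (hU : IsOpen U) (hx : x ∈ U) (hne : U ≠ {x}) :
    ∃ V ∈ B, x ∈ V ∧ V ⊂ U := by
  obtain ⟨z, hzU, hzx⟩ : ∃ z ∈ U, z ≠ x := by
    by_contra! h
    exact hne (eq_singleton_iff_unique_mem.2 ⟨hx, h⟩)
  obtain ⟨V, hVB, hxV, hVU⟩ :=
    hB.exists_subset_of_mem_open (show x ∈ U ∩ {z}ᶜ from ⟨hx, hzx.symm⟩)
      (hU.inter isOpen_compl_singleton)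
  exact ⟨V, hVB, hxV, ssubset_of_subset_not_subset (hVU.trans inter_subset_left)
    fun hUV => (hVU (hUV hzU)).2 rfl⟩

section Shrink

variable {B : Set (Set X)} {x : X} {U : Set X}

open Classical in
noncomputable def shrink (B : Set (Set X)) (x : X) (U : Set X) : Set X :=
  if h : ∃ V ∈ B, x ∈ V ∧ V ⊂ U then h.choose else U

theorem shrink_mem_ssubset (h : ∃ V ∈ B, x ∈ V ∧ V ⊂ U) :
    shrink B x U ∈ B ∧ shrink B x U ⊂ U := by
  rw [shrink, dif_pos h]
  exact ⟨h.choose_spec.1, h.choose_spec.2.2⟩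

theorem shrink_eq_self (h : ¬ ∃ V ∈ B, x ∈ V ∧ V ⊂ U) : shrink B x U = U := by
  rw [shrink, dif_neg h]

theorem shrink_subset : shrink B x U ⊆ U := by
  by_cases h : ∃ V ∈ B, x ∈ V ∧ V ⊂ U
  · exact (shrink_mem_ssubset h).2.subset
  · exact (shrink_eq_self h).subset

theorem mem_shrink (hx : x ∈ U) : x ∈ shrink B x U := by
  by_cases h : ∃ V ∈ B, x ∈ V ∧ V ⊂ U
  · rw [shrink, dif_pos h]
    exact h.choose_spec.2.1
  · rwa [shrink_eq_self h]

theorem isOpen_shrink [TopologicalSpace X] (hB : ∀ V ∈ B, IsOpen V) (hU : IsOpen U) :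
    IsOpen (shrink B x U) := by
  by_cases h : ∃ V ∈ B, x ∈ V ∧ V ⊂ U
  · exact hB _ (shrink_mem_ssubset h).1
  · rwa [shrink_eq_self h]

theorem shrink_eq_singleton [TopologicalSpace X] [T1Space X] (hB : IsTopologicalBasis B)
    (hU : IsOpen U) (hx : x ∈ U) (h : ¬ ∃ V ∈ B, x ∈ V ∧ V ⊂ U) : shrink B x U = {x} := by
  rw [shrink_eq_self h]
  by_contra hne
  exact h (hB.exists_mem_ssubset_of_ne_singleton hU hx hne)

noncomputable def shrinkStrategy (B : Set (Set X)) : NStrategy X := fun _ m => shrink B m.1 m.2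

theorem isStationaryStrategy_shrinkStrategy : IsStationaryStrategy (shrinkStrategy B) :=
  fun _ _ => rfl

end Shrink

section ShrinkStrategy

variable [TopologicalSpace X] {B : Set (Set X)}

theorem validStrategy_shrinkStrategy (hB : ∀ V ∈ B, IsOpen V) :
    ValidStrategy (shrinkStrategy B) := fun _ _ hL n =>
  ⟨isOpen_shrink hB (hL n).1, mem_shrink (hL n).2.1, shrink_subset⟩

theorem convergentStrategy_shrinkStrategy [T1Space X] (hB : IsTopologicalBasis B)
    (hco : CountableOrderBasis B) : ConvergentStrategy (shrinkStrategy B) := by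
  intro x U hL y hy W hW hyW
  have hyV : ∀ n, y ∈ shrink B (x n) (U n) := mem_iInter.1 hy
  by_cases hstrict : ∀ n, ∃ V ∈ B, x n ∈ V ∧ V ⊂ U n
  · refine hco y (fun n => shrink B (x n) (U n)) (fun n => ⟨?_, hyV n, ?_⟩) W hW hyW
    · exact (shrink_mem_ssubset (hstrict n)).1
    · exact (shrink_mem_ssubset (hstrict (n + 1))).2.trans_le (hL n).2.2
  · obtain ⟨n, hn⟩ := not_forall.1 hstrict
    have hsingle := shrink_eq_singleton hB (hL n).1 (hL n).2.1 hn
    have hyx : y = x n := by simpa [hsingle] using hyV n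
    refine ⟨n, ?_⟩
    change shrink B (x n) (U n) ⊆ W
    rw [hsingle, singleton_subset_iff, ← hyx]
    exact hyW

end ShrinkStrategy

/-- If a T1 space has a basis of countable order, then Nonempty has a stationary
convergent strategy in the Choquet game (not necessarily winning). -/
theorem stmt15 (X : Type*) [TopologicalSpace X] [T1Space X] (B : Set (Set X))
    (hB : IsTopologicalBasis B) (hco : CountableOrderBasis B) :
    ∃ S : NStrategy X, ValidStrategy S ∧ IsStationaryStrategy S ∧ ConvergentStrategy S :=
  ⟨shrinkStrategy B, validStrategy_shrinkStrategy fun _ => hB.isOpen,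
    isStationaryStrategy_shrinkStrategy, convergentStrategy_shrinkStrategy hB hco⟩
end

section
/- Let X and Y be T1 spaces and f : X → Y an open continuous surjection such that f⁻¹({y}) is compact for every y ∈ Y. If X is paracompact, then Y is metacompact. -/
open TopologicalSpace Set

universe u

variable {X : Type*}

/-! Pull the cover back along `f`, take a locally finite open refinement in `X` and push it
forward: openness of `f` keeps it open, surjectivity keeps it a cover, and since a locally finite
family meets each compact fibre in only finitely many members, the image family is point-finite. -/

lemma LocallyFinite.finite_setOf_mem_image {X Y ι : Type*} [TopologicalSpace X] {v : ι → Set X}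
    (hv : LocallyFinite v) {f : X → Y} (hcpt : ∀ y : Y, IsCompact (f ⁻¹' {y})) (y : Y) :
    {i | y ∈ f '' v i}.Finite :=
  (hv.finite_nonempty_inter_compact (hcpt y)).subset fun _ ⟨x, hx, hxy⟩ => ⟨x, hx, hxy⟩

lemma Set.Finite.setOf_mem_range_and_mem {α ι : Type*} {g : ι → Set α} {a : α}
    (h : {i | a ∈ g i}.Finite) : {V ∈ range g | a ∈ V}.Finite :=
  (h.image g).subset <| by
    rintro _ ⟨⟨i, rfl⟩, ha⟩
    exact ⟨i, ha, rfl⟩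

theorem stmt17_general (X Y : Type*) [TopologicalSpace X] [TopologicalSpace Y]
    [ParacompactSpace X]
    (f : X → Y) (hcont : Continuous f) (hopen : IsOpenMap f)
    (hsurj : Function.Surjective f) (hcpt : ∀ y : Y, IsCompact (f ⁻¹' {y})) :
    MetacompactSpace Y := by
  intro 𝒰 hUo hUcov
  have hcov : ⋃ U : 𝒰, f ⁻¹' (U : Set Y) = univ := by
    rw [← preimage_iUnion, ← sUnion_eq_iUnion, hUcov, preimage_univ]
  obtain ⟨v, hvo, hvcov, hvlf, hvsub⟩ := precise_refinement (fun U : 𝒰 => f ⁻¹' (U : Set Y))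
    (fun U => (hUo U U.2).preimage hcont) hcov
  refine ⟨range fun U => f '' v U, ?_, ?_, ?_, fun y =>
    (hvlf.finite_setOf_mem_image hcpt y).setOf_mem_range_and_mem⟩
  · rintro _ ⟨U, rfl⟩
    exact hopen _ (hvo U)
  · rw [sUnion_range, ← image_iUnion, hvcov, image_univ_of_surjective hsurj]
  · rintro _ ⟨U, rfl⟩
    exact ⟨U, U.2, (image_mono (hvsub U)).trans (image_preimage_subset f _)⟩

/-- An open continuous compact image of a paracompact T1 space is metacompact. -/
theorem stmt17 (X Y : Type*) [TopologicalSpace X] [TopologicalSpace Y]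
    [T1Space X] [T1Space Y] [ParacompactSpace X]
    (f : X → Y) (hcont : Continuous f) (hopen : IsOpenMap f)
    (hsurj : Function.Surjective f) (hcpt : ∀ y : Y, IsCompact (f ⁻¹' {y})) :
    MetacompactSpace Y :=
  stmt17_general X Y f hcont hopen hsurj hcpt
end
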